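/- arXiv:2404.08575 — 2 statements merged into one kernel-verified Lean document; each statement's English description precedes it below -/
import Mathlib

section
/- Let (N₁, N₁') be a centered Gaussian vector with covariance matrix [[s², ρ],[ρ, s²]] where |ρ| < s², and let (N₂, N₂') be a centered Gaussian vector with covariance matrix [[s² + |ρ|, 0],[0, s² + |ρ|]]. Then for any measurable set A ⊆ ℝ², P((N₁, N₁') ∈ A) ≤ √((s² + |ρ|)/(s² − |ρ|)) · P((N₂, N₂') ∈ A). -/
open MeasureTheory Real

/-- Gaussian comparison lemma (Lemma 7 of ABR2): if `(N₁,N₁')` is a centered Gaussian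
vector with covariance `[[s²,ρ],[ρ,s²]]`, `|ρ| < s²`, and `(N₂,N₂')` is a centered
Gaussian vector with independent coordinates of variance `s² + |ρ|`, then for every
measurable `A ⊆ ℝ²`,
`P((N₁,N₁') ∈ A) ≤ √((s² + |ρ|)/(s² − |ρ|)) · P((N₂,N₂') ∈ A)`.
The two Gaussian laws are realized by their explicit densities with respect to Lebesgue
measure on `ℝ × ℝ`. -/
theorem gaussian_comparison
    (s ρ : ℝ) (hs : 0 < s) (hρ : |ρ| < s ^ 2)
    (A : Set (ℝ × ℝ)) (hA : MeasurableSet A) :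
    (∫ z in A, (1 / (2 * π * Real.sqrt (s ^ 4 - ρ ^ 2))) *
        Real.exp (-(s ^ 2 * z.1 ^ 2 - 2 * ρ * z.1 * z.2 + s ^ 2 * z.2 ^ 2) /
          (2 * (s ^ 4 - ρ ^ 2)))) ≤
      Real.sqrt ((s ^ 2 + |ρ|) / (s ^ 2 - |ρ|)) *
      ∫ z in A, (1 / (2 * π * (s ^ 2 + |ρ|))) *
        Real.exp (-(z.1 ^ 2 + z.2 ^ 2) / (2 * (s ^ 2 + |ρ|))) := by
  have hπ : (0:ℝ) < π := Real.pi_pos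
  set v : ℝ := s ^ 2 + |ρ| with hv
  set w : ℝ := s ^ 2 - |ρ| with hw
  have hvpos : 0 < v := by have := abs_nonneg ρ; positivity
  have hwpos : 0 < w := by rw [hw]; linarith
  have hprod : s ^ 4 - ρ ^ 2 = v * w := by
    have : |ρ| ^ 2 = ρ ^ 2 := sq_abs ρ
    rw [hv, hw]; nlinarith [this]
  set f₁ : ℝ × ℝ → ℝ := fun z => (1 / (2 * π * Real.sqrt (s ^ 4 - ρ ^ 2))) *
      Real.exp (-(s ^ 2 * z.1 ^ 2 - 2 * ρ * z.1 * z.2 + s ^ 2 * z.2 ^ 2) /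
        (2 * (s ^ 4 - ρ ^ 2))) with hf₁
  set f₂ : ℝ × ℝ → ℝ := fun z => (1 / (2 * π * v)) *
      Real.exp (-(z.1 ^ 2 + z.2 ^ 2) / (2 * v)) with hf₂
  set C : ℝ := Real.sqrt (v / w) with hC
  -- the constants agree
  have hsv : Real.sqrt v > 0 := Real.sqrt_pos.2 hvpos
  have hsw : Real.sqrt w > 0 := Real.sqrt_pos.2 hwpos
  have hconst : C * (1 / (2 * π * v)) = 1 / (2 * π * Real.sqrt (s ^ 4 - ρ ^ 2)) := by
    have hv2 : Real.sqrt v * Real.sqrt v = v := Real.mul_self_sqrt hvpos.le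
    rw [hC, hprod, Real.sqrt_div hvpos.le, Real.sqrt_mul hvpos.le]
    field_simp
    linear_combination hv2
  -- pointwise comparison
  have hpt : ∀ z : ℝ × ℝ, f₁ z ≤ C * f₂ z := by
    intro ⟨x, y⟩
    have hExp : Real.exp (-(s ^ 2 * x ^ 2 - 2 * ρ * x * y + s ^ 2 * y ^ 2) /
          (2 * (s ^ 4 - ρ ^ 2))) ≤ Real.exp (-(x ^ 2 + y ^ 2) / (2 * v)) := by
      apply Real.exp_le_exp.2
      rw [hprod, div_le_div_iff₀ (by positivity) (by positivity)]
      have h1 : (|ρ| - ρ) * (x + y) ^ 2 ≥ 0 :=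
        mul_nonneg (by linarith [le_abs_self ρ]) (sq_nonneg _)
      have h2 : (|ρ| + ρ) * (x - y) ^ 2 ≥ 0 :=
        mul_nonneg (by linarith [neg_abs_le ρ]) (sq_nonneg _)
      have hkey : w * (x ^ 2 + y ^ 2) ≤ s ^ 2 * x ^ 2 - 2 * ρ * x * y + s ^ 2 * y ^ 2 := by
        rw [hw]; nlinarith [h1, h2]
      nlinarith [mul_le_mul_of_nonneg_left hkey (by positivity : (0:ℝ) ≤ 2 * v)]
    calc f₁ (x, y) = (1 / (2 * π * Real.sqrt (s ^ 4 - ρ ^ 2))) *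
          Real.exp (-(s ^ 2 * x ^ 2 - 2 * ρ * x * y + s ^ 2 * y ^ 2) /
            (2 * (s ^ 4 - ρ ^ 2))) := rfl
      _ ≤ (1 / (2 * π * Real.sqrt (s ^ 4 - ρ ^ 2))) *
          Real.exp (-(x ^ 2 + y ^ 2) / (2 * v)) := by
          apply mul_le_mul_of_nonneg_left hExp
          rw [hprod]; positivity
      _ = C * f₂ (x, y) := by rw [hf₂]; dsimp only; rw [← mul_assoc, hconst]
  -- integrability of f₂
  have hg : Integrable (fun x : ℝ => Real.exp (-(1 / (2 * v)) * x ^ 2)) :=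
    integrable_exp_neg_mul_sq (by positivity)
  have hf₂int : Integrable f₂ := by
    have hgg : Integrable (fun z : ℝ × ℝ =>
        Real.exp (-(1 / (2 * v)) * z.1 ^ 2) * Real.exp (-(1 / (2 * v)) * z.2 ^ 2))
        (volume : Measure (ℝ × ℝ)) := by
      rw [Measure.volume_eq_prod]
      exact hg.mul_prod hg
    have : f₂ = fun z : ℝ × ℝ => (1 / (2 * π * v)) *
        (Real.exp (-(1 / (2 * v)) * z.1 ^ 2) * Real.exp (-(1 / (2 * v)) * z.2 ^ 2)) := by
      funext z
      rw [hf₂]; dsimp only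
      rw [← Real.exp_add]
      ring_nf
    rw [this]
    exact hgg.const_mul _
  have hf₂A : IntegrableOn f₂ A := hf₂int.integrableOn
  have hCf₂A : IntegrableOn (fun z => C * f₂ z) A := hf₂A.const_mul C
  -- integrability of f₁ on A
  have hf₁meas : AEStronglyMeasurable f₁ (volume.restrict A) := by
    apply Continuous.aestronglyMeasurable
    rw [hf₁]
    fun_prop
  have hf₁A : IntegrableOn f₁ A := by
    apply Integrable.mono' hCf₂A hf₁meas
    filter_upwards with z
    rw [Real.norm_eq_abs, abs_of_nonneg (by rw [hf₁]; positivity)]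
    exact hpt z
  calc (∫ z in A, f₁ z) ≤ ∫ z in A, C * f₂ z :=
        setIntegral_mono_on hf₁A hCf₂A hA (fun z _ => hpt z)
    _ = C * ∫ z in A, f₂ z := integral_const_mul C f₂
end

section
/- Fix α ∈ (0,1) and ε ∈ (0, 1−α). There is a constant C (depending only on α, ε) such that for all sufficiently large t, with θ = t^{−α}, Σ_{k = ⌈t^{α+ε}⌉}^{⌊t⌋−1} exp(−θ k + 2α log k + α log(t − k)) ≤ C, where the sum is over integers k with t^{α+ε} ≤ k ≤ t−1. -/
open Real

/-- Fix `α ∈ (0,1)` and `ε ∈ (0, 1−α)`. There is `C` such that for all large `t`,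
with `θ = t^{−α}`,
`∑_{t^{α+ε} ≤ k ≤ t−1} exp(−θ k + 2α log k + α log(t − k)) ≤ C`. -/
theorem sum_decoupling_bounded (α ε : ℝ) (hα : α ∈ Set.Ioo (0 : ℝ) 1)
    (hε : ε ∈ Set.Ioo (0 : ℝ) (1 - α)) :
    ∃ C : ℝ, 0 < C ∧ ∃ t₀ : ℝ, ∀ t : ℝ, t₀ ≤ t →
      ∑ k ∈ Finset.Icc ⌈t ^ (α + ε)⌉₊ (⌊t⌋₊ - 1),
        Real.exp (-(t ^ (-α)) * (k : ℝ) + 2 * α * Real.log (k : ℝ)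
          + α * Real.log (t - (k : ℝ))) ≤ C := by
  obtain ⟨hα0, hα1⟩ := hα
  obtain ⟨hε0, hε1⟩ := hε
  have hlog : Real.log =o[Filter.atTop] fun t => t ^ ε :=
    isLittleO_log_rpow_atTop hε0
  have hev : ∀ᶠ t : ℝ in Filter.atTop, 4 * Real.log t ≤ t ^ ε := by
    filter_upwards [hlog.bound (by norm_num : (0:ℝ) < 1/4),
      Filter.eventually_ge_atTop (1:ℝ)] with t ht ht1
    have hlt : |Real.log t| = Real.log t := abs_of_nonneg (Real.log_nonneg ht1)
    have ha : |t ^ ε| = t ^ ε := abs_of_nonneg (Real.rpow_nonneg (by linarith) _)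
    rw [Real.norm_eq_abs, Real.norm_eq_abs, hlt, ha] at ht
    linarith
  obtain ⟨t₀, ht₀⟩ := Filter.eventually_atTop.mp
    (hev.and (Filter.eventually_ge_atTop (1:ℝ)))
  refine ⟨1, one_pos, t₀, fun t ht => ?_⟩
  obtain ⟨hlog4, ht1⟩ := ht₀ t ht
  have ht0 : (0:ℝ) < t := lt_of_lt_of_le one_pos ht1
  have hlogt : 0 ≤ Real.log t := Real.log_nonneg ht1
  have hfloor : (⌊t⌋₊ : ℝ) ≤ t := Nat.floor_le ht0.le
  have hfl1 : 1 ≤ ⌊t⌋₊ := Nat.one_le_floor_iff t |>.mpr ht1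
  set B : ℝ := Real.exp (-(t ^ ε) + 3 * Real.log t) with hB
  have hbound : ∀ k ∈ Finset.Icc ⌈t ^ (α + ε)⌉₊ (⌊t⌋₊ - 1),
      Real.exp (-(t ^ (-α)) * (k : ℝ) + 2 * α * Real.log (k : ℝ)
          + α * Real.log (t - (k : ℝ))) ≤ B := by
    intro k hk
    rw [Finset.mem_Icc] at hk
    have hk1 : t ^ (α + ε) ≤ (k : ℝ) :=
      le_trans (Nat.le_ceil _) (Nat.cast_le.mpr hk.1)
    have hkge1 : (1:ℝ) ≤ (k : ℝ) :=
      le_trans (Real.one_le_rpow ht1 (by linarith)) hk1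
    have hk2 : k + 1 ≤ ⌊t⌋₊ := by omega
    have hkt : (k : ℝ) + 1 ≤ t := by
      have : ((k + 1 : ℕ) : ℝ) ≤ (⌊t⌋₊ : ℝ) := Nat.cast_le.mpr hk2
      push_cast at this
      linarith
    rw [hB, Real.exp_le_exp]
    have h1 : t ^ ε ≤ t ^ (-α) * k := by
      have heq : t ^ (-α) * t ^ (α + ε) = t ^ ε := by
        rw [← Real.rpow_add ht0]; ring_nf
      calc t ^ ε = t ^ (-α) * t ^ (α + ε) := heq.symm
        _ ≤ t ^ (-α) * k :=
          mul_le_mul_of_nonneg_left hk1 (Real.rpow_nonneg ht0.le _)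
    have h2 : Real.log k ≤ Real.log t :=
      Real.log_le_log (by linarith) (by linarith)
    have h3 : Real.log (t - k) ≤ Real.log t :=
      Real.log_le_log (by linarith) (by linarith)
    nlinarith [mul_le_mul_of_nonneg_left h2 hα0.le,
      mul_le_mul_of_nonneg_left h3 hα0.le,
      mul_nonneg hα0.le hlogt, mul_le_mul_of_nonneg_right hα1.le hlogt]
  calc ∑ k ∈ Finset.Icc ⌈t ^ (α + ε)⌉₊ (⌊t⌋₊ - 1),
        Real.exp (-(t ^ (-α)) * (k : ℝ) + 2 * α * Real.log (k : ℝ)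
          + α * Real.log (t - (k : ℝ)))
      ≤ (Finset.Icc ⌈t ^ (α + ε)⌉₊ (⌊t⌋₊ - 1)).card • B :=
        Finset.sum_le_card_nsmul _ _ _ hbound
    _ ≤ (⌊t⌋₊ : ℝ) * B := by
        rw [nsmul_eq_mul]
        have hcard : (Finset.Icc ⌈t ^ (α + ε)⌉₊ (⌊t⌋₊ - 1)).card ≤ ⌊t⌋₊ := by
          rw [Nat.card_Icc]; omega
        exact mul_le_mul_of_nonneg_right (Nat.cast_le.mpr hcard) (Real.exp_pos _).le
    _ ≤ t * B := mul_le_mul_of_nonneg_right hfloor (Real.exp_pos _).le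
    _ = Real.exp (Real.log t) * B := by rw [Real.exp_log ht0]
    _ = Real.exp (4 * Real.log t - t ^ ε) := by
        rw [hB, ← Real.exp_add]; congr 1; ring
    _ ≤ 1 := by
        rw [← Real.exp_zero]
        exact Real.exp_le_exp.mpr (by linarith)
end
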